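/- arXiv:2302.09614 — 5 statements merged into one kernel-verified Lean document; each statement's English description precedes it below -/
import Mathlib

section
/- In a 2-connected graph G, for any edge e = (u,u') and any vertex w not incident to e, there exists a simple cycle containing both the edge e and the vertex w. -/
/-!
It suffices to find a `u'`–`u` path through `w`; closing it with the edge `u u'` gives the cycle.
For distinct `a`, `b`, such an `a`–`b` path through `w` is built along a walk from `w` to `a`
avoiding `b`: if `w` is adjacent to `a`, extend a `w`–`b` path avoiding `a` by the edge `a w`.
Otherwise let `x` be the next vertex of the walk and `P` an `a`–`b` path through `x` not
containing `w`. A path from `w` to `P` avoiding `x` first hits `P` at some `y ≠ x`; the segment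
of `P` between `y` and `x` is replaced by this path followed by the edge `w x`.
-/

/-- `G` is `k`-vertex-connected: more than `k` vertices and no set of fewer than `k`
vertices disconnects it. -/
def IsKConnected {V : Type*} [Fintype V] (G : SimpleGraph V) (k : ℕ) : Prop :=
  k + 1 ≤ Fintype.card V ∧
    ∀ S : Finset V, S.card < k → (G.induce (↑S : Set V)ᶜ).Connected

open SimpleGraph Walk

namespace SimpleGraph.Walk

variable {V : Type*} {G : SimpleGraph V}

theorem IsPath.eq_of_mem_support_of_append {u v w z : V} {p : G.Walk u v} {q : G.Walk v w}
    (hpq : (p.append q).IsPath) (hp : z ∈ p.support) (hq : z ∈ q.support) : z = v :=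
  by_contra fun h => hpq.ne_of_mem_support_of_append h hp hq rfl

theorem IsPath.append {u v w : V} {p : G.Walk u v} {q : G.Walk v w} (hp : p.IsPath)
    (hq : q.IsPath) (h : ∀ z ∈ p.support, z ∈ q.support → z = v) : (p.append q).IsPath := by
  rw [isPath_def, support_append]
  refine hp.support_nodup.append hq.support_nodup.tail fun z hzp hzq => ?_
  have hzv : z = v := h z hzp (List.mem_of_mem_tail hzq)
  subst hzv
  exact (List.nodup_cons.mp (q.cons_tail_support ▸ hq.support_nodup)).1 hzq

theorem IsPath.isCycle_cons_of_mem_support {u v w : V} {p : G.Walk v u} (hp : p.IsPath)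
    (h : G.Adj u v) (hw : w ∈ p.support) (hwu : w ≠ u) (hwv : w ≠ v) :
    (cons h p).IsCycle := by
  refine (cons_isCycle_iff p h).2 ⟨hp, fun hmem => ?_⟩
  rw [hp.eq_adj_toWalk_of_mem_edges (Sym2.eq_swap ▸ hmem)] at hw
  simp_all

theorem exists_isPath_to_first_mem {u v : V} (p : G.Walk u v) {S : Set V} (hv : v ∈ S) :
    ∃ y ∈ S, ∃ q : G.Walk u y, q.IsPath ∧ q.support ⊆ p.support ∧
      ∀ z ∈ q.support, z ∈ S → z = y := by
  classical
  induction p with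
  | nil => exact ⟨_, hv, nil, IsPath.nil, by simp, by simp⟩
  | @cons u _ _ h p ih =>
    by_cases hu : u ∈ S
    · exact ⟨u, hu, nil, IsPath.nil, by simp, by simp⟩
    obtain ⟨y, hy, q, -, hqp, hqS⟩ := ih hv
    refine ⟨y, hy, (cons h q).bypass, bypass_isPath _, ?_, fun z hz hzS => ?_⟩
    · exact fun z hz => List.cons_subset_cons u hqp (support_bypass_subset_support _ hz)
    · rcases List.mem_cons.mp (support_bypass_subset_support _ hz) with rfl | hz
      · exact absurd hzS hu
      · exact hqS z hz hzS

/-- The detour `T ++ q.reverse ++ (w x) ++ P₂` replaces the segment `D` of the path. -/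
theorem exists_isPath_mem_support_of_splice {a b x y w : V} {T : G.Walk a y}
    {D : G.Walk y x} {P₂ : G.Walk x b} (hP : (T.append (D.append P₂)).IsPath) (hyx : y ≠ x)
    (hwx : G.Adj w x) (hwP : w ∉ (T.append (D.append P₂)).support) {q : G.Walk w y}
    (hq : q.IsPath)
    (hqP : ∀ z ∈ q.support, z ∈ (T.append (D.append P₂)).support → z = y) :
    ∃ R : G.Walk a b, R.IsPath ∧ w ∈ R.support := by
  have hTP₂ : ∀ z ∈ T.support, z ∉ P₂.support := by
    intro z hzT hzP₂
    obtain rfl := hP.eq_of_mem_support_of_append hzT ((mem_support_append_iff _ _).2 (.inr hzP₂))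
    exact hyx (hP.of_append_right.eq_of_mem_support_of_append D.start_mem_support hzP₂)
  simp only [mem_support_append_iff, not_or] at hwP hqP
  refine ⟨T.append (q.reverse.append (cons hwx P₂)), ?_, by simp⟩
  refine hP.of_append_left.append (hq.reverse.append
    (hP.of_append_right.of_append_right.cons hwP.2.2) fun z hzq hz => ?_) fun z hzT hz => ?_
  · rw [support_reverse, List.mem_reverse] at hzq
    rcases List.mem_cons.mp (support_cons hwx P₂ ▸ hz) with rfl | hzP₂
    · rfl
    · obtain rfl := hqP z hzq (.inr (.inr hzP₂))
      exact absurd hzP₂ (hTP₂ _ T.end_mem_support)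
  · simp only [mem_support_append_iff, support_reverse, List.mem_reverse, support_cons,
      List.mem_cons] at hz
    rcases hz with hzq | rfl | hzP₂
    · exact hqP z hzq (.inl hzT)
    · exact absurd hzT hwP.1
    · exact absurd hzP₂ (hTP₂ z hzT)

end SimpleGraph.Walk

section TwoConnected

variable {V : Type*} [Fintype V] {G : SimpleGraph V}

theorem IsKConnected.exists_isPath_avoiding {k : ℕ} (h : IsKConnected G k) {S : Finset V}
    (hS : S.card < k) {a b : V} (ha : a ∉ S) (hb : b ∉ S) :
    ∃ p : G.Walk a b, p.IsPath ∧ ∀ z ∈ p.support, z ∉ S := by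
  classical
  obtain ⟨q⟩ := (h.2 S hS).preconnected ⟨a, by simpa⟩ ⟨b, by simpa⟩
  refine ⟨(q.map (Embedding.induce _).toHom).bypass, bypass_isPath _, fun z hz => ?_⟩
  obtain ⟨⟨z, hzS⟩, -, rfl⟩ := List.mem_map.mp
    (support_map _ q ▸ support_bypass_subset_support _ hz)
  simpa using hzS

theorem IsKConnected.exists_isPath_mem_support_of_adj (h2 : IsKConnected G 2) {a b x w : V}
    {P : G.Walk a b} (hP : P.IsPath) (hxP : x ∈ P.support) (hxa : x ≠ a)
    (hwP : w ∉ P.support) (hwx : G.Adj w x) :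
    ∃ R : G.Walk a b, R.IsPath ∧ w ∈ R.support := by
  obtain ⟨Q, -, hxQ⟩ := h2.exists_isPath_avoiding (S := {x}) (by simp)
    (a := w) (b := a) (by simpa using hwx.ne) (by simpa using hxa.symm)
  obtain ⟨y, hyP, q, hq, hqQ, hqP⟩ :=
    Q.exists_isPath_to_first_mem (S := {z | z ∈ P.support}) P.start_mem_support
  have hyx : y ≠ x := fun hyx => hxQ y (hqQ q.end_mem_support) (by simp [hyx])
  obtain ⟨P₁, P₂, rfl⟩ := P.mem_support_iff_exists_append.mp hxP
  rcases (mem_support_append_iff _ _).mp hyP with hy | hy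
  · obtain ⟨T, D, rfl⟩ := P₁.mem_support_iff_exists_append.mp hy
    rw [← append_assoc] at hP hwP hqP
    exact exists_isPath_mem_support_of_splice hP hyx hwx hwP hq hqP
  · obtain ⟨D, T, rfl⟩ := P₂.mem_support_iff_exists_append.mp hy
    have hrev : (P₁.append (D.append T)).reverse =
        T.reverse.append (D.reverse.append P₁.reverse) := by
      simp [reverse_append, append_assoc]
    obtain ⟨R, hR, hwR⟩ := exists_isPath_mem_support_of_splice (hrev ▸ hP.reverse) hyx hwx
      (by rwa [← hrev, support_reverse, List.mem_reverse]) hq fun z hz hzP =>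
        hqP z hz (by rwa [← hrev, support_reverse, List.mem_reverse] at hzP)
    exact ⟨R.reverse, hR.reverse, by simpa using hwR⟩

theorem IsKConnected.exists_isPath_mem_support_of_walk (h2 : IsKConnected G 2) {a b w : V}
    (hab : a ≠ b) (W : G.Walk w a) (hbW : b ∉ W.support) (hwa : w ≠ a) :
    ∃ P : G.Walk a b, P.IsPath ∧ w ∈ P.support := by
  induction W with
  | nil => exact absurd rfl hwa
  | @cons w x a hwx W ih =>
    by_cases hxa : x = a
    · subst hxa
      obtain ⟨Q, hQ, haQ⟩ := h2.exists_isPath_avoiding (S := {x}) (by simp)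
        (a := w) (b := b) (by simpa using hwa) (by simpa using hab.symm)
      exact ⟨cons hwx.symm Q, hQ.cons (by simpa using haQ x), by simp⟩
    obtain ⟨P, hP, hxP⟩ := ih hab (fun h => hbW (by simp [h])) hxa
    by_cases hwP : w ∈ P.support
    · exact ⟨P, hP, hwP⟩
    · exact h2.exists_isPath_mem_support_of_adj hP hxP hxa hwP hwx

theorem IsKConnected.exists_isPath_mem_support (h2 : IsKConnected G 2) {a b w : V}
    (hab : a ≠ b) (hwa : w ≠ a) (hwb : w ≠ b) :
    ∃ P : G.Walk a b, P.IsPath ∧ w ∈ P.support := by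
  obtain ⟨W, -, hbW⟩ := h2.exists_isPath_avoiding (S := {b}) (by simp)
    (a := w) (b := a) (by simpa using hwb) (by simpa using hab)
  exact h2.exists_isPath_mem_support_of_walk hab W (by simpa using hbW b) hwa

end TwoConnected

/-- In a 2-connected graph, any edge and any vertex not incident to it lie on a
common simple cycle. -/
theorem cycle_through_edge_and_vertex {V : Type*} [Fintype V]
    (G : SimpleGraph V) (h2 : IsKConnected G 2)
    (u u' w : V) (he : G.Adj u u') (hwu : w ≠ u) (hwu' : w ≠ u') :
    ∃ (x : V) (c : G.Walk x x), c.IsCycle ∧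
      s(u, u') ∈ c.edges ∧ w ∈ c.support := by
  obtain ⟨P, hP, hwP⟩ := h2.exists_isPath_mem_support he.ne.symm hwu' hwu
  exact ⟨u, cons he P, hP.isCycle_cons_of_mem_support he hwP hwu hwu', by simp, by simp [hwP]⟩
end

section
/- In a 3-connected graph G, if edges e1 = (v1,v2) and e2 = (v2,v3) share the vertex v2, and e3 = (v4,v5) is vertex-disjoint from e1 and e2, then there exists a simple cycle of G containing e1, e2, and e3. -/
namespace SimpleGraph

variable {V : Type*} {G : SimpleGraph V}

namespace Walk

def InternallyDisjoint {u v : V} (p q : G.Walk u v) : Prop :=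
  ∀ x ∈ p.support, x ∈ q.support → x = u ∨ x = v

lemma InternallyDisjoint.symm {u v : V} {p q : G.Walk u v} (h : p.InternallyDisjoint q) :
    q.InternallyDisjoint p :=
  fun x hq hp => h x hp hq

lemma IsPath.append_of_support_inter {u v w : V} {p : G.Walk u v} {q : G.Walk v w}
    (hp : p.IsPath) (hq : q.IsPath) (hpq : ∀ x ∈ p.support, x ∈ q.support → x = v) :
    (p.append q).IsPath := by
  have hv : v ∉ q.support.tail := (List.nodup_cons.mp (q.cons_tail_support ▸ hq.support_nodup)).1
  rw [isPath_def, support_append]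
  refine hp.support_nodup.append hq.support_nodup.tail fun x hxp hxq => ?_
  exact hv (hpq x hxp (List.mem_of_mem_tail hxq) ▸ hxq)

lemma exists_walk_first_mem (T : V → Prop) {v u : V} (R : G.Walk v u) (hu : T u) :
    ∃ (x : V) (S : G.Walk v x), T x ∧ S.support ⊆ R.support ∧
      ∀ y ∈ S.support, T y → y = x := by
  induction R with
  | nil => exact ⟨_, nil, hu, by simp, by simp⟩
  | @cons a _ _ h R ih =>
    by_cases ha : T a
    · exact ⟨a, nil, ha, by simp, by simp⟩
    · obtain ⟨x, S, hx, hsub, hfirst⟩ := ih hu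
      refine ⟨x, cons h S, hx, ?_, ?_⟩
      · simpa using List.cons_subset_cons a hsub
      · simp only [support_cons, List.mem_cons, forall_eq_or_imp]
        exact ⟨fun h => absurd h ha, hfirst⟩

lemma exists_support_map_some_eq {K : SimpleGraph (Option V)}
    (hK : ∀ a b, K.Adj (some a) (some b) → G.Adj a b) {x y : Option V} (r : K.Walk x y)
    {a b : V} (ha : x = some a) (hb : y = some b) (hr : none ∉ r.support) :
    ∃ r' : G.Walk a b, r'.support.map some = r.support := by
  induction r generalizing a with
  | nil =>
    obtain rfl : a = b := Option.some_injective _ (ha.symm.trans hb)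
    exact ⟨nil, by simp [ha]⟩
  | @cons x m y h t ih =>
    subst ha
    obtain ⟨c, rfl⟩ : ∃ c, m = some c :=
      Option.ne_none_iff_exists'.mp fun hm => hr (by simp [← hm])
    obtain ⟨t', ht'⟩ := ih rfl hb fun h => hr (by simp [h])
    exact ⟨cons (hK _ _ h) t', by simp [ht']⟩

variable [DecidableEq V]

/-- Whitney's step: `q` is extended by the edge `wv`, and `p` is rerouted at `x`, where `S`
first meets the pair, back along `S` to `v`. -/
lemma InternallyDisjoint.extend {u w v x : V} (huv : u ≠ v) (hwv : G.Adj w v)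
    {p q : G.Walk u w} (hp : p.IsPath) (hq : q.IsPath) (hpq : p.InternallyDisjoint q)
    {S : G.Walk v x} (hS : S.IsPath) (hwS : w ∉ S.support) (hxp : x ∈ p.support)
    (hfirst : ∀ y ∈ S.support, y ∈ p.support ∨ y ∈ q.support → y = x) :
    ∃ p' q' : G.Walk u v, p'.IsPath ∧ q'.IsPath ∧ p'.InternallyDisjoint q' := by
  have hxS : x ∈ S.support := S.end_mem_support
  have hxw : x ≠ w := fun h => hwS (h ▸ hxS)
  have hxq : x ∈ q.support → x = u := fun h => (hpq x hxp h).resolve_right hxw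
  have hvq : v ∉ q.support := fun h => by
    obtain rfl : v = x := hfirst v S.start_mem_support (Or.inr h)
    exact huv (hxq h).symm
  have hwp : w ∉ (p.takeUntil x hxp).support := endpoint_notMem_support_takeUntil hp hxp hxw.symm
  refine ⟨(p.takeUntil x hxp).append S.reverse, q.concat hwv,
    (hp.takeUntil hxp).append_of_support_inter hS.reverse fun y hy hyS => ?_,
    hq.concat hvq hwv, fun y hy hyq => ?_⟩
  · exact hfirst y (by simpa using hyS) (Or.inl (p.support_takeUntil_subset_support hxp hy))
  rw [support_concat, List.mem_append, List.mem_singleton] at hyq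
  rw [mem_support_append_iff, support_reverse, List.mem_reverse] at hy
  rcases hyq with hyq | rfl
  · rcases hy with hy | hy
    · exact (hpq y (p.support_takeUntil_subset_support hxp hy) hyq).imp_right
        fun h => absurd (h ▸ hy) hwp
    · obtain rfl := hfirst y hy (Or.inr hyq)
      exact Or.inl (hxq hyq)
  · exact Or.inr rfl

end Walk

def NoSeparatingVertex (G : SimpleGraph V) : Prop :=
  ∀ w a b : V, a ≠ w → b ≠ w → ∃ p : G.Walk a b, w ∉ p.support

theorem NoSeparatingVertex.exists_internallyDisjoint_paths [DecidableEq V]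
    (hG : G.NoSeparatingVertex) {u v : V} (huv : u ≠ v) (h : G.Reachable u v) :
    ∃ p q : G.Walk u v, p.IsPath ∧ q.IsPath ∧ p.InternallyDisjoint q := by
  obtain ⟨R⟩ := h.symm
  clear h
  induction R with
  | nil => exact absurd rfl huv
  | @cons v w u hvw t ih =>
    by_cases hwu : w = u
    · subst hwu
      exact ⟨hvw.symm.toWalk, hvw.symm.toWalk, hvw.symm.isPath_toWalk, hvw.symm.isPath_toWalk,
        fun x hx _ => by simpa using hx⟩
    obtain ⟨p, q, hp, hq, hpq⟩ := ih (Ne.symm hwu)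
    obtain ⟨R, hwR⟩ := hG w v u hvw.ne (Ne.symm hwu)
    obtain ⟨x, S, hx, hSR, hfirst⟩ :=
      R.exists_walk_first_mem (fun y => y ∈ p.support ∨ y ∈ q.support) (Or.inl p.start_mem_support)
    have hwS : w ∉ S.bypass.support := fun h => hwR (hSR (S.support_bypass_subset_support h))
    have hfirst' := fun y hy => hfirst y (S.support_bypass_subset_support hy)
    rcases hx with hxp | hxq
    · exact hpq.extend huv hvw.symm hp hq S.bypass_isPath hwS hxp hfirst'
    · exact hpq.symm.extend huv hvw.symm hq hp S.bypass_isPath hwS hxq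
        fun y hy h => hfirst' y hy h.symm

def wedgeEdgeGraph (G : SimpleGraph V) (v1 v2 v3 v4 v5 : V) : SimpleGraph (Option V) where
  Adj
    | some a, some b => G.Adj a b ∧ (a = v2 → b = v1 ∨ b = v3) ∧ (b = v2 → a = v1 ∨ a = v3)
    | some a, none => a = v4 ∨ a = v5
    | none, some b => b = v4 ∨ b = v5
    | none, none => False
  symm := by
    constructor
    rintro (_ | a) (_ | b) h
    · exact h.elim
    · exact h
    · exact h
    · exact ⟨h.1.symm, h.2.2, h.2.1⟩
  loopless := by
    constructor
    rintro (_ | a) h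
    · exact h.elim
    · exact G.loopless.irrefl a h.1

namespace wedgeEdgeGraph

variable {v1 v2 v3 v4 v5 : V}

@[simp]
lemma adj_some_some {a b : V} : (G.wedgeEdgeGraph v1 v2 v3 v4 v5).Adj (some a) (some b) ↔
    G.Adj a b ∧ (a = v2 → b = v1 ∨ b = v3) ∧ (b = v2 → a = v1 ∨ a = v3) := Iff.rfl

@[simp]
lemma adj_some_none {a : V} : (G.wedgeEdgeGraph v1 v2 v3 v4 v5).Adj (some a) none ↔
    a = v4 ∨ a = v5 := Iff.rfl

@[simp]
lemma adj_none_some {b : V} : (G.wedgeEdgeGraph v1 v2 v3 v4 v5).Adj none (some b) ↔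
    b = v4 ∨ b = v5 := Iff.rfl

@[simp]
lemma not_adj_none_none : ¬ (G.wedgeEdgeGraph v1 v2 v3 v4 v5).Adj none none := id

lemma exists_walk_of_induce {s : Set V} (hv2 : v2 ∈ s) (hs : (G.induce sᶜ).Connected)
    {a b : V} (ha : a ∉ s) (hb : b ∉ s) :
    ∃ q : (G.wedgeEdgeGraph v1 v2 v3 v4 v5).Walk (some a) (some b),
      ∀ z ∈ q.support, ∃ y ∉ s, z = some y := by
  let f : G.induce sᶜ →g G.wedgeEdgeGraph v1 v2 v3 v4 v5 :=
    ⟨fun x => some x.1, fun {x y} h =>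
      ⟨h, fun e => absurd (e ▸ hv2) x.2, fun e => absurd (e ▸ hv2) y.2⟩⟩
  obtain ⟨q⟩ := hs.preconnected ⟨a, ha⟩ ⟨b, hb⟩
  refine ⟨q.map f, fun z hz => ?_⟩
  obtain ⟨y, -, rfl⟩ := List.mem_map.mp (Walk.support_map f q ▸ hz)
  exact ⟨y, y.2, rfl⟩

/-- `w.getD v2` is the vertex of `G` that `w` stands for, and `v2` when `w` is the new vertex. -/
lemma exists_walk_to_some (h12 : G.Adj v1 v2) (h23 : G.Adj v2 v3) (h13 : v1 ≠ v3)
    (h24 : v2 ≠ v4) (h25 : v2 ≠ v5) (h45 : v4 ≠ v5) {w a : Option V} (ha : a ≠ w) :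
    ∃ a' : V, a' ≠ v2 ∧ a' ≠ w.getD v2 ∧
      ∃ p : (G.wedgeEdgeGraph v1 v2 v3 v4 v5).Walk a (some a'), w ∉ p.support := by
  rcases a with _ | c
  · obtain ⟨x, rfl⟩ := Option.ne_none_iff_exists'.mp ha.symm
    obtain ⟨c, hc, hcx⟩ : ∃ c, (c = v4 ∨ c = v5) ∧ c ≠ x := by
      by_cases h : v4 = x
      · exact ⟨v5, Or.inr rfl, h ▸ h45.symm⟩
      · exact ⟨v4, Or.inl rfl, h⟩
    refine ⟨c, by rintro rfl; tauto, hcx, (adj_none_some.mpr hc).toWalk, ?_⟩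
    simpa using hcx.symm
  by_cases hc : c = v2
  · subst hc
    obtain ⟨d, hd, hdx⟩ : ∃ d, (d = v1 ∨ d = v3) ∧ d ≠ w.getD c := by
      by_cases h : v1 = w.getD c
      · exact ⟨v3, Or.inr rfl, h ▸ h13.symm⟩
      · exact ⟨v1, Or.inl rfl, h⟩
    have hdc : d ≠ c := by rcases hd with rfl | rfl <;> simp [h12.ne, h23.ne']
    refine ⟨d, hdc, hdx, (adj_some_some.mpr ⟨?_, fun _ => hd, fun h => absurd h hdc⟩).toWalk, ?_⟩
    · rcases hd with rfl | rfl <;> simp [h12.symm, h23]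
    · rintro hw
      simp only [Adj.toWalk, Walk.support_cons, Walk.support_nil, List.mem_cons,
        List.not_mem_nil, or_false] at hw
      rcases hw with rfl | rfl
      · exact ha rfl
      · exact hdx rfl
  · refine ⟨c, hc, ?_, Walk.nil, by simpa using ha.symm⟩
    rcases w with _ | x
    · exact hc
    · exact fun h => ha (h ▸ rfl)

theorem noSeparatingVertex
    (hconn : ∀ S : Finset V, S.card < 3 → (G.induce (↑S : Set V)ᶜ).Connected)
    (h12 : G.Adj v1 v2) (h23 : G.Adj v2 v3) (h13 : v1 ≠ v3)
    (h24 : v2 ≠ v4) (h25 : v2 ≠ v5) (h45 : v4 ≠ v5) :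
    (G.wedgeEdgeGraph v1 v2 v3 v4 v5).NoSeparatingVertex := by
  classical
  intro w a b ha hb
  obtain ⟨a', ha2, haw, pa, hpa⟩ := exists_walk_to_some h12 h23 h13 h24 h25 h45 ha
  obtain ⟨b', hb2, hbw, pb, hpb⟩ := exists_walk_to_some h12 h23 h13 h24 h25 h45 hb
  let S : Finset V := {v2, w.getD v2}
  obtain ⟨q, hq⟩ := exists_walk_of_induce (v1 := v1) (v2 := v2) (v3 := v3) (v4 := v4) (v5 := v5)
    (a := a') (b := b') (s := ↑S) (by simp [S])
    (hconn S (Finset.card_le_two.trans_lt (by norm_num)))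
    (by simp [S, ha2, haw]) (by simp [S, hb2, hbw])
  refine ⟨pa.append (q.append pb.reverse), ?_⟩
  simp only [Walk.mem_support_append_iff, Walk.support_reverse, List.mem_reverse, not_or]
  refine ⟨hpa, fun hwq => ?_, hpb⟩
  obtain ⟨y, hy, rfl⟩ := hq w hwq
  exact hy (by simp [S])

lemma exists_path_of_isPath (h24 : v2 ≠ v4) (h25 : v2 ≠ v5)
    {p : (G.wedgeEdgeGraph v1 v2 v3 v4 v5).Walk (some v2) none} (hp : p.IsPath) :
    ∃ (c1 c4 : V) (P : G.Walk c1 c4), (c1 = v1 ∨ c1 = v3) ∧ (c4 = v4 ∨ c4 = v5) ∧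
      P.IsPath ∧ ∀ z ∈ P.support, z ≠ v2 ∧ some z ∈ p.support := by
  have hnil : ¬ p.Nil := fun h => Option.some_ne_none v2 h.eq
  have hsnd := p.adj_snd hnil
  obtain ⟨c1, hc1⟩ : ∃ c1, p.snd = some c1 := by
    cases h : p.snd with
    | none => rw [h, adj_some_none] at hsnd; tauto
    | some c1 => exact ⟨c1, rfl⟩
  have htnil : ¬ p.tail.Nil := fun h => Option.some_ne_none c1 (hc1 ▸ h.eq)
  have hpen := p.tail.adj_penultimate htnil
  obtain ⟨c4, hc4⟩ : ∃ c4, p.tail.penultimate = some c4 := by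
    cases h : p.tail.penultimate with
    | none => rw [h] at hpen; exact absurd hpen not_adj_none_none
    | some c4 => exact ⟨c4, rfl⟩
  rw [hc1, adj_some_some] at hsnd
  rw [hc4, adj_some_none] at hpen
  have hsupp : p.support = some v2 :: (p.tail.dropLast.support ++ [none]) := by
    rw [Walk.support_dropLast_concat htnil, Walk.cons_support_tail hnil]
  have hnd := hp.support_nodup
  rw [hsupp, List.nodup_cons, List.nodup_append] at hnd
  obtain ⟨hv2, hrnd, -, hnone⟩ := hnd
  obtain ⟨P, hP⟩ := p.tail.dropLast.exists_support_map_some_eq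
    (fun _ _ h => (adj_some_some.mp h).1) hc1 hc4
    fun h => hnone none h none (List.mem_singleton_self _) rfl
  have hPr : ∀ z ∈ P.support, some z ∈ p.tail.dropLast.support := fun z hz =>
    hP ▸ List.mem_map_of_mem hz
  refine ⟨c1, c4, P, hsnd.2.1 rfl, hpen,
    (Walk.isPath_def P).mpr (List.Nodup.of_map some (hP ▸ hrnd)), fun z hz => ⟨?_, ?_⟩⟩
  · rintro rfl
    exact hv2 (List.mem_append_left _ (hPr _ hz))
  · rw [hsupp]
    exact List.mem_cons_of_mem _ (List.mem_append_left _ (hPr z hz))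

lemma exists_disjoint_paths (h13 : v1 ≠ v3) (h24 : v2 ≠ v4) (h25 : v2 ≠ v5)
    {p q : (G.wedgeEdgeGraph v1 v2 v3 v4 v5).Walk (some v2) none} (hp : p.IsPath) (hq : q.IsPath)
    (hpq : p.InternallyDisjoint q) :
    ∃ (x y : V) (P : G.Walk v1 x) (Q : G.Walk v3 y), s(x, y) = s(v4, v5) ∧ P.IsPath ∧
      Q.IsPath ∧ v2 ∉ P.support ∧ v2 ∉ Q.support ∧ P.support.Disjoint Q.support := by
  obtain ⟨c1, c4, P, hc1, hc4, hP, hPp⟩ := exists_path_of_isPath h24 h25 hp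
  obtain ⟨d1, d4, Q, hd1, hd4, hQ, hQq⟩ := exists_path_of_isPath h24 h25 hq
  have hPQ : P.support.Disjoint Q.support := fun z hzP hzQ => by
    rcases hpq (some z) (hPp z hzP).2 (hQq z hzQ).2 with h | h
    · exact (hPp z hzP).1 (Option.some_injective _ h)
    · exact Option.some_ne_none z h
  have h1 : c1 ≠ d1 := fun h => hPQ P.start_mem_support (h ▸ Q.start_mem_support)
  have h4 : c4 ≠ d4 := fun h => hPQ P.end_mem_support (h ▸ Q.end_mem_support)
  have hv2P : v2 ∉ P.support := fun h => (hPp v2 h).1 rfl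
  have hv2Q : v2 ∉ Q.support := fun h => (hQq v2 h).1 rfl
  have hs4 : s(c4, d4) = s(v4, v5) := by
    rcases hc4 with rfl | rfl <;> rcases hd4 with rfl | rfl <;> simp_all [Sym2.eq_swap]
  rcases hc1 with rfl | rfl <;> rcases hd1 with rfl | rfl
  · exact absurd rfl h1
  · exact ⟨c4, d4, P, Q, hs4, hP, hQ, hv2P, hv2Q, hPQ⟩
  · exact ⟨d4, c4, Q, P, Sym2.eq_swap.trans hs4, hQ, hP, hv2Q, hv2P, hPQ.symm⟩
  · exact absurd rfl h1

end wedgeEdgeGraph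

lemma exists_isCycle_of_disjoint_paths {a b c d e : V} (hab : G.Adj a b) (hbc : G.Adj b c)
    (hde : G.Adj d e) (hac : a ≠ c) {P : G.Walk a d} {Q : G.Walk c e} (hP : P.IsPath)
    (hQ : Q.IsPath) (hbP : b ∉ P.support) (hbQ : b ∉ Q.support)
    (hPQ : P.support.Disjoint Q.support) :
    ∃ C : G.Walk b b, C.IsCycle ∧ s(a, b) ∈ C.edges ∧ s(b, c) ∈ C.edges ∧ s(d, e) ∈ C.edges := by
  have hdQ : d ∉ Q.support := fun h => hPQ P.end_mem_support h
  let D := P.append (Walk.cons hde Q.reverse)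
  have hD : D.IsPath := hP.append_of_support_inter
    ((Walk.cons_isPath_iff _ _).mpr ⟨hQ.reverse, by simpa using hdQ⟩) fun x hxP hx => by
      simp only [Walk.support_cons, Walk.support_reverse, List.mem_cons, List.mem_reverse] at hx
      exact hx.resolve_right (hPQ hxP)
  have hbD : b ∉ D.support := by
    simp only [D, Walk.mem_support_append_iff, Walk.support_cons, Walk.support_reverse,
      List.mem_cons, List.mem_reverse, not_or]
    exact ⟨hbP, fun h => hbP (h ▸ P.end_mem_support), hbQ⟩
  refine ⟨Walk.cons hab.symm (D.concat hbc.symm),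
    (Walk.cons_isCycle_iff _ _).mpr ⟨hD.concat hbD hbc.symm, fun h => ?_⟩, ?_, ?_, ?_⟩
  · rw [Walk.edges_concat, List.concat_eq_append, List.mem_append, List.mem_singleton] at h
    rcases h with h | h
    · exact hbD (D.fst_mem_support_of_mem_edges h)
    · rw [Sym2.eq_iff] at h
      rcases h with ⟨rfl, rfl⟩ | ⟨-, rfl⟩ <;> exact hac rfl
  · simp [Sym2.eq_swap]
  · simp [Sym2.eq_swap]
  · simp [D]

end SimpleGraph

open SimpleGraph in
/-- In a 3-connected graph, two edges sharing an endpoint together with a third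
vertex-disjoint edge lie on a common simple cycle. -/
theorem cycle_through_wedge_and_edge {V : Type*} [Fintype V]
    (G : SimpleGraph V) (h3 : IsKConnected G 3)
    (v1 v2 v3 v4 v5 : V)
    (h12 : G.Adj v1 v2) (h23 : G.Adj v2 v3) (h45 : G.Adj v4 v5)
    (hdist : List.Pairwise (· ≠ ·) [v1, v2, v3, v4, v5]) :
    ∃ (w : V) (c : G.Walk w w), c.IsCycle ∧
      s(v1, v2) ∈ c.edges ∧ s(v2, v3) ∈ c.edges ∧ s(v4, v5) ∈ c.edges := by
  classical
  simp only [List.pairwise_cons, List.mem_cons, List.not_mem_nil, List.Pairwise.nil,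
    forall_eq_or_imp, forall_eq, or_false, and_true] at hdist
  obtain ⟨⟨-, n13, -, -⟩, ⟨-, n24, n25⟩, -, n45, -⟩ := hdist
  have hK := wedgeEdgeGraph.noSeparatingVertex h3.2 h12 h23 n13 n24 n25 n45
  obtain ⟨r, -⟩ := hK (some v4) (some v2) none (by simpa using n24) (by simp)
  obtain ⟨p, q, hp, hq, hpq⟩ := hK.exists_internallyDisjoint_paths (by simp) ⟨r⟩
  obtain ⟨x, y, P, Q, hxy, hP, hQ, hv2P, hv2Q, hPQ⟩ :=
    wedgeEdgeGraph.exists_disjoint_paths n13 n24 n25 hp hq hpq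
  have hadj : G.Adj x y := by rw [← G.mem_edgeSet, hxy]; exact h45
  obtain ⟨C, hC, hC12, hC23, hCxy⟩ :=
    exists_isCycle_of_disjoint_paths h12 h23 hadj n13 hP hQ hv2P hv2Q hPQ
  exact ⟨v2, C, hC, hC12, hC23, hxy ▸ hCxy⟩
end

section
/- Path splicing lemma: Let G be a graph with distinct vertices s, t and edges e1=(u,u'), e2=(v,v') with all six vertices s,t,u,u',v,v' distinct. Suppose there is a simple cycle L = ((u,u'), P_{u'v'}, (v',v), P_{vu}) containing e1 and e2 such that s, t are not on L, and there are mutually vertex-disjoint paths P1 from s to L and P2 from t to L whose endpoints both lie on the same arc of L between the two edges (both on P_{vu} or both on P_{u'v'}). Then there exists a simple path from s to t containing both e1 and e2. -/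
open SimpleGraph

private lemma isPath_append_of {V : Type*} {G : SimpleGraph V} {a b c : V}
    {p : G.Walk a b} {q : G.Walk b c} (hp : p.IsPath) (hq : q.IsPath)
    (h : ∀ z ∈ p.support, z ∈ q.support → z = b) : (p.append q).IsPath := by
  rw [Walk.isPath_def, Walk.support_append]
  refine List.Nodup.append hp.support_nodup hq.support_nodup.tail ?_
  intro z hzp hzq
  have hb : z = b := h z hzp (List.mem_of_mem_tail hzq)
  subst hb
  have hnd := hq.support_nodup
  rw [q.support_eq_cons] at hnd
  exact (List.nodup_cons.mp hnd).1 hzq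

private lemma mem_take_drop {V : Type*} [DecidableEq V] {G : SimpleGraph V} {a b w : V}
    (Q : G.Walk a b) (hQ : Q.IsPath) (hw : w ∈ Q.support) :
    ∀ z, z ∈ (Q.takeUntil w hw).support → z ∈ (Q.dropUntil w hw).support → z = w := by
  intro z h1 h2
  have hnd : ((Q.takeUntil w hw).support ++ (Q.dropUntil w hw).support.tail).Nodup := by
    rw [← Walk.support_append, Walk.take_spec]; exact hQ.support_nodup
  rw [(Q.dropUntil w hw).support_eq_cons] at h2
  rcases List.mem_cons.mp h2 with h2 | h2
  · exact h2
  · exact ((List.disjoint_of_nodup_append hnd) h1 h2).elim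

private lemma core2 {V : Type*} {G : SimpleGraph V} {s t u u' v v' x y : V}
    (huu' : G.Adj u u') (hv'v : G.Adj v' v)
    (P : G.Walk u' v') (W1 : G.Walk v x) (W3 : G.Walk y u)
    (P1 : G.Walk s x) (P2 : G.Walk t y)
    (hP : P.IsPath) (hW1 : W1.IsPath) (hW3 : W3.IsPath)
    (hP1 : P1.IsPath) (hP2 : P2.IsPath)
    (dPW1 : ∀ z, z ∈ P.support → z ∈ W1.support → False)
    (dPW3 : ∀ z, z ∈ P.support → z ∈ W3.support → False)
    (dW13 : ∀ z, z ∈ W1.support → z ∈ W3.support → False)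
    (dP1 : ∀ z ∈ P1.support, (z ∈ P.support ∨ z ∈ W1.support ∨ z ∈ W3.support) → z = x)
    (dP2 : ∀ z ∈ P2.support, (z ∈ P.support ∨ z ∈ W1.support ∨ z ∈ W3.support) → z = y)
    (dP12 : ∀ z, z ∈ P1.support → z ∈ P2.support → False) :
    ∃ p : G.Walk s t, p.IsPath ∧ s(u, u') ∈ p.edges ∧ s(v, v') ∈ p.edges := by
  -- B : u' → y
  have hB : (Walk.cons huu'.symm W3.reverse).IsPath := by
    refine hW3.reverse.cons ?_
    rw [Walk.support_reverse, List.mem_reverse]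
    exact fun h => dPW3 u' P.start_mem_support h
  -- C : v' → y
  have hC : (P.reverse.append (Walk.cons huu'.symm W3.reverse)).IsPath := by
    refine isPath_append_of hP.reverse hB ?_
    intro z hz1 hz2
    rw [Walk.support_reverse, List.mem_reverse] at hz1
    rw [Walk.support_cons, List.mem_cons] at hz2
    rcases hz2 with hz2 | hz2
    · exact hz2
    · rw [Walk.support_reverse, List.mem_reverse] at hz2
      exact (dPW3 z hz1 hz2).elim
  -- D : v → y
  have hD : (Walk.cons hv'v.symm (P.reverse.append (Walk.cons huu'.symm W3.reverse))).IsPath := by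
    refine hC.cons ?_
    rw [Walk.mem_support_append_iff]
    rintro (h | h)
    · rw [Walk.support_reverse, List.mem_reverse] at h
      exact dPW1 v h W1.start_mem_support
    · rw [Walk.support_cons, List.mem_cons] at h
      rcases h with h | h
      · exact dPW1 v (h ▸ P.start_mem_support) W1.start_mem_support
      · rw [Walk.support_reverse, List.mem_reverse] at h
        exact dW13 v W1.start_mem_support h
  -- M : x → y
  have hMsup : ∀ z, z ∈ (W1.reverse.append (Walk.cons hv'v.symm
      (P.reverse.append (Walk.cons huu'.symm W3.reverse)))).support →
      z ∈ P.support ∨ z ∈ W1.support ∨ z ∈ W3.support := by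
    intro z hz
    rw [Walk.mem_support_append_iff] at hz
    rcases hz with hz | hz
    · rw [Walk.support_reverse, List.mem_reverse] at hz
      exact Or.inr (Or.inl hz)
    · rw [Walk.support_cons, List.mem_cons] at hz
      rcases hz with hz | hz
      · exact Or.inr (Or.inl (hz ▸ W1.start_mem_support))
      · rw [Walk.mem_support_append_iff] at hz
        rcases hz with hz | hz
        · rw [Walk.support_reverse, List.mem_reverse] at hz
          exact Or.inl hz
        · rw [Walk.support_cons, List.mem_cons] at hz
          rcases hz with hz | hz
          · exact Or.inl (hz ▸ P.start_mem_support)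
          · rw [Walk.support_reverse, List.mem_reverse] at hz
            exact Or.inr (Or.inr hz)
  have hM : (W1.reverse.append (Walk.cons hv'v.symm
      (P.reverse.append (Walk.cons huu'.symm W3.reverse)))).IsPath := by
    refine isPath_append_of hW1.reverse hD ?_
    intro z hz1 hz2
    rw [Walk.support_reverse, List.mem_reverse] at hz1
    rw [Walk.support_cons, List.mem_cons] at hz2
    rcases hz2 with hz2 | hz2
    · exact hz2
    · rw [Walk.mem_support_append_iff] at hz2
      rcases hz2 with hz2 | hz2
      · rw [Walk.support_reverse, List.mem_reverse] at hz2
        exact (dPW1 z hz2 hz1).elim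
      · rw [Walk.support_cons, List.mem_cons] at hz2
        rcases hz2 with hz2 | hz2
        · exact (dPW1 z (hz2 ▸ P.start_mem_support) hz1).elim
        · rw [Walk.support_reverse, List.mem_reverse] at hz2
          exact (dW13 z hz1 hz2).elim
  -- E : x → t
  have hE : ((W1.reverse.append (Walk.cons hv'v.symm
      (P.reverse.append (Walk.cons huu'.symm W3.reverse)))).append P2.reverse).IsPath := by
    refine isPath_append_of hM hP2.reverse ?_
    intro z hz1 hz2
    rw [Walk.support_reverse, List.mem_reverse] at hz2
    exact dP2 z hz2 (hMsup z hz1)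
  refine ⟨P1.append ((W1.reverse.append (Walk.cons hv'v.symm
      (P.reverse.append (Walk.cons huu'.symm W3.reverse)))).append P2.reverse), ?_, ?_, ?_⟩
  · refine isPath_append_of hP1 hE ?_
    intro z hz1 hz2
    rw [Walk.mem_support_append_iff] at hz2
    rcases hz2 with hz2 | hz2
    · exact dP1 z hz1 (hMsup z hz2)
    · rw [Walk.support_reverse, List.mem_reverse] at hz2
      exact (dP12 z hz1 hz2).elim
  · simp only [Walk.edges_append, Walk.edges_cons, List.mem_append, List.mem_cons]
    exact Or.inr (Or.inl (Or.inr (Or.inr (Or.inr (Or.inl Sym2.eq_swap)))))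
  · simp only [Walk.edges_append, Walk.edges_cons, List.mem_append, List.mem_cons]
    exact Or.inr (Or.inl (Or.inr (Or.inl (by simp))))

private lemma core {V : Type*} [DecidableEq V] {G : SimpleGraph V} {s t u u' v v' x y : V}
    (huu' : G.Adj u u') (hv'v : G.Adj v' v)
    (P : G.Walk u' v') (Q : G.Walk v u)
    (hP : P.IsPath) (hQ : Q.IsPath)
    (hPQ : ∀ z, z ∈ P.support → z ∈ Q.support → False)
    (P1 : G.Walk s x) (P2 : G.Walk t y)
    (hP1 : P1.IsPath) (hP2 : P2.IsPath)
    (dP12 : ∀ z, z ∈ P1.support → z ∈ P2.support → False)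
    (dP1 : ∀ z ∈ P1.support, (z ∈ P.support ∨ z ∈ Q.support) → z = x)
    (dP2 : ∀ z ∈ P2.support, (z ∈ P.support ∨ z ∈ Q.support) → z = y)
    (hx : x ∈ Q.support) (hy : y ∈ Q.support) (hxy : x ≠ y) :
    ∃ p : G.Walk s t, p.IsPath ∧ s(u, u') ∈ p.edges ∧ s(v, v') ∈ p.edges := by
  have hTy := hQ.takeUntil hy
  have hDy := hQ.dropUntil hy
  have dTyDy := mem_take_drop Q hQ hy
  by_cases hc : x ∈ (Q.takeUntil y hy).support
  · -- x lies before y on Q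
    have hW1 := hTy.takeUntil hc
    have dW12 := mem_take_drop _ hTy hc
    have hsub1 : ∀ z, z ∈ ((Q.takeUntil y hy).takeUntil x hc).support → z ∈ Q.support :=
      fun z hz => Walk.support_takeUntil_subset Q hy (Walk.support_takeUntil_subset _ hc hz)
    have hsub3 : ∀ z, z ∈ (Q.dropUntil y hy).support → z ∈ Q.support :=
      fun z hz => Walk.support_dropUntil_subset Q hy hz
    have dW13 : ∀ z, z ∈ ((Q.takeUntil y hy).takeUntil x hc).support →
        z ∈ (Q.dropUntil y hy).support → False := by
      intro z h1 h3
      have hzy : z = y := dTyDy z (Walk.support_takeUntil_subset _ hc h1) h3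
      exact hxy (dW12 y (hzy ▸ h1) ((Q.takeUntil y hy).dropUntil x hc).end_mem_support).symm
    exact core2 huu' hv'v P ((Q.takeUntil y hy).takeUntil x hc) (Q.dropUntil y hy) P1 P2
      hP hW1 hDy hP1 hP2
      (fun z h1 h2 => hPQ z h1 (hsub1 z h2))
      (fun z h1 h2 => hPQ z h1 (hsub3 z h2))
      dW13
      (fun z hz h => dP1 z hz (h.imp id (fun h => h.elim (hsub1 z) (hsub3 z))))
      (fun z hz h => dP2 z hz (h.imp id (fun h => h.elim (hsub1 z) (hsub3 z))))
      dP12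
  · -- y lies before x on Q
    have hcd : x ∈ (Q.dropUntil y hy).support := by
      have := hx
      rw [← Walk.take_spec Q hy, Walk.mem_support_append_iff] at this
      exact this.resolve_left hc
    have hW3 := hDy.dropUntil hcd
    have dW12 := mem_take_drop _ hDy hcd
    have hsub1 : ∀ z, z ∈ (Q.takeUntil y hy).support → z ∈ Q.support :=
      fun z hz => Walk.support_takeUntil_subset Q hy hz
    have hsub3 : ∀ z, z ∈ ((Q.dropUntil y hy).dropUntil x hcd).support → z ∈ Q.support :=
      fun z hz => Walk.support_dropUntil_subset Q hy (Walk.support_dropUntil_subset _ hcd hz)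
    have dW13 : ∀ z, z ∈ (Q.takeUntil y hy).support →
        z ∈ ((Q.dropUntil y hy).dropUntil x hcd).support → False := by
      intro z h1 h3
      have hzy : z = y := dTyDy z h1 (Walk.support_dropUntil_subset _ hcd h3)
      exact hxy (dW12 y ((Q.dropUntil y hy).takeUntil x hcd).start_mem_support (hzy ▸ h3)).symm
    obtain ⟨q, hq, e1, e2⟩ := core2 huu' hv'v P (Q.takeUntil y hy)
      ((Q.dropUntil y hy).dropUntil x hcd) P2 P1
      hP hTy hW3 hP2 hP1
      (fun z h1 h2 => hPQ z h1 (hsub1 z h2))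
      (fun z h1 h2 => hPQ z h1 (hsub3 z h2))
      dW13
      (fun z hz h => dP2 z hz (h.imp id (fun h => h.elim (hsub1 z) (hsub3 z))))
      (fun z hz h => dP1 z hz (h.imp id (fun h => h.elim (hsub1 z) (hsub3 z))))
      (fun z h1 h2 => dP12 z h2 h1)
    exact ⟨q.reverse, hq.reverse, by rwa [Walk.edges_reverse, List.mem_reverse],
      by rwa [Walk.edges_reverse, List.mem_reverse]⟩

/-- Path-splicing lemma: given a simple cycle `L = ((u,u'), P, (v',v), Q)` through
`e1 = (u,u')` and `e2 = (v,v')` avoiding `s` and `t`, and vertex-disjoint paths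
`P1` from `s` and `P2` from `t` that meet `L` only at their final vertices, both
lying on the same arc of `L` (both on `Q = P_{vu}` or both on `P = P_{u'v'}`),
there is a simple `s`-`t` path containing `e1` and `e2`. -/
theorem path_splice {V : Type*} (G : SimpleGraph V)
    (s t u u' v v' : V)
    (hdist : List.Pairwise (· ≠ ·) [s, t, u, u', v, v'])
    (huu' : G.Adj u u') (hv'v : G.Adj v' v)
    (P : G.Walk u' v') (Q : G.Walk v u)
    (hL : (Walk.cons huu' (P.append (Walk.cons hv'v Q))).IsCycle)
    (hs : s ∉ (Walk.cons huu' (P.append (Walk.cons hv'v Q))).support)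
    (ht : t ∉ (Walk.cons huu' (P.append (Walk.cons hv'v Q))).support)
    (x y : V) (P1 : G.Walk s x) (P2 : G.Walk t y)
    (hP1 : P1.IsPath) (hP2 : P2.IsPath)
    (hdisj : ∀ z, z ∈ P1.support → z ∈ P2.support → False)
    (hP1L : ∀ z ∈ P1.support,
      z ∈ (Walk.cons huu' (P.append (Walk.cons hv'v Q))).support → z = x)
    (hP2L : ∀ z ∈ P2.support,
      z ∈ (Walk.cons huu' (P.append (Walk.cons hv'v Q))).support → z = y)
    (hxy : (x ∈ Q.support ∧ y ∈ Q.support) ∨ (x ∈ P.support ∧ y ∈ P.support)) :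
    ∃ p : G.Walk s t, p.IsPath ∧ s(u, u') ∈ p.edges ∧ s(v, v') ∈ p.edges := by
  classical
  have hnd : (P.support ++ Q.support).Nodup := by
    have h := hL.support_nodup
    simpa [Walk.support_cons, Walk.support_append] using h
  have hP : P.IsPath := Walk.isPath_def _ |>.mpr hnd.of_append_left
  have hQ : Q.IsPath := Walk.isPath_def _ |>.mpr hnd.of_append_right
  have hPQ : ∀ z, z ∈ P.support → z ∈ Q.support → False :=
    fun z h1 h2 => List.disjoint_of_nodup_append hnd h1 h2
  have hCsup : ∀ z, (z ∈ P.support ∨ z ∈ Q.support) →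
      z ∈ (Walk.cons huu' (P.append (Walk.cons hv'v Q))).support := by
    intro z h
    rw [Walk.support_cons, List.mem_cons]
    refine Or.inr ?_
    rw [Walk.mem_support_append_iff]
    rcases h with h | h
    · exact Or.inl h
    · exact Or.inr (by rw [Walk.support_cons, List.mem_cons]; exact Or.inr h)
  have dP1 : ∀ z ∈ P1.support, (z ∈ P.support ∨ z ∈ Q.support) → z = x :=
    fun z hz h => hP1L z hz (hCsup z h)
  have dP2 : ∀ z ∈ P2.support, (z ∈ P.support ∨ z ∈ Q.support) → z = y :=
    fun z hz h => hP2L z hz (hCsup z h)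
  have hxny : x ≠ y := fun h =>
    hdisj x P1.end_mem_support (h ▸ P2.end_mem_support)
  rcases hxy with ⟨hxQ, hyQ⟩ | ⟨hxP, hyP⟩
  · exact core huu' hv'v P Q hP hQ hPQ P1 P2 hP1 hP2 hdisj dP1 dP2 hxQ hyQ hxny
  · obtain ⟨p, hp, e1, e2⟩ := core hv'v huu' Q P hQ hP
      (fun z h1 h2 => hPQ z h2 h1) P1 P2 hP1 hP2 hdisj
      (fun z hz h => dP1 z hz h.symm)
      (fun z hz h => dP2 z hz h.symm)
      hxP hyP hxny
    exact ⟨p, hp, by rwa [Sym2.eq_swap] at e2, by rwa [Sym2.eq_swap] at e1⟩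
end

section
/- Two edge cuts of a connected graph G are called crossing if the two corresponding 2-partitions of the vertex set subdivide V into four non-empty subsets. If a connected graph has two crossing 3-edge cuts, then it has an edge cut of size 1 or 2. -/
/-- `E'` is a (minimal) edge cut of `G`. -/
def IsEdgeCut {V : Type*} (G : SimpleGraph V) (E' : Finset (Sym2 V)) : Prop :=
  ↑E' ⊆ G.edgeSet ∧ ¬ (G.deleteEdges ↑E').Connected ∧
    ∀ F : Finset (Sym2 V), F ⊂ E' → (G.deleteEdges ↑F).Connected

/-- `A` is a side of the edge cut `E'`: both `A` and its complement are non-empty,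
and `E'` consists exactly of the edges of `G` joining `A` to its complement. -/
def IsCutSide {V : Type*} (G : SimpleGraph V) (E' : Finset (Sym2 V)) (A : Set V) : Prop :=
  A.Nonempty ∧ Aᶜ.Nonempty ∧
    (↑E' : Set (Sym2 V)) = {e | e ∈ G.edgeSet ∧ ∃ a ∈ A, ∃ b ∈ Aᶜ, e = s(a, b)}

namespace SmallCutAux

variable {V : Type*}

open scoped Classical

/-- The set of edges of `G` crossing from `X` to its complement. -/
def crossSet (G : SimpleGraph V) (X : Set V) : Set (Sym2 V) :=
  {e | e ∈ G.edgeSet ∧ ∃ a ∈ X, ∃ b ∈ Xᶜ, e = s(a, b)}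

lemma crossSet_subset_edgeSet (G : SimpleGraph V) (X : Set V) :
    crossSet G X ⊆ G.edgeSet := fun _ he => he.1

lemma crossSet_compl (G : SimpleGraph V) (X : Set V) : crossSet G Xᶜ = crossSet G X := by
  ext e
  simp only [crossSet, Set.mem_setOf_eq, compl_compl]
  constructor
  · rintro ⟨he, a, ha, b, hb, rfl⟩; exact ⟨he, b, hb, a, ha, Sym2.eq_swap⟩
  · rintro ⟨he, a, ha, b, hb, rfl⟩; exact ⟨he, b, hb, a, ha, Sym2.eq_swap⟩

lemma crossSet_inter_subset (G : SimpleGraph V) (X Y : Set V) :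
    crossSet G (X ∩ Y) ⊆ crossSet G X ∪ crossSet G Y := by
  rintro e ⟨he, a, ha, b, hb, rfl⟩
  rcases (show b ∉ X ∨ b ∉ Y by by_contra h; push_neg at h; exact hb ⟨h.1, h.2⟩) with h | h
  · exact Or.inl ⟨he, a, ha.1, b, h, rfl⟩
  · exact Or.inr ⟨he, a, ha.2, b, h, rfl⟩

lemma crossSet_walk_mem (G : SimpleGraph V) (X : Set V) :
    ∀ {x y : V}, (G.deleteEdges (crossSet G X)).Walk x y → x ∈ X → y ∈ X := by
  intro x y w
  induction w with
  | nil => exact id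
  | cons h p ih =>
    intro hx
    rw [SimpleGraph.deleteEdges_adj] at h
    exact ih (by_contra fun hb => h.2 ⟨(G.mem_edgeSet).mpr h.1, _, hx, _, hb, rfl⟩)

lemma crossSet_disconnect (G : SimpleGraph V) {X : Set V} (hX : X.Nonempty)
    (hXc : Xᶜ.Nonempty) : ¬ (G.deleteEdges (crossSet G X)).Connected := by
  intro h
  obtain ⟨x, hx⟩ := hX
  obtain ⟨y, hy⟩ := hXc
  obtain ⟨w⟩ := h.preconnected x y
  exact hy (crossSet_walk_mem G X w hx)

lemma exists_small_edge_cut (G : SimpleGraph V) (hconn : G.Connected)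
    (S : Finset (Sym2 V)) (hS : ↑S ⊆ G.edgeSet)
    (hd : ¬ (G.deleteEdges ↑S).Connected) (hcard : S.card ≤ 2) :
    ∃ F : Finset (Sym2 V), IsEdgeCut G F ∧ (F.card = 1 ∨ F.card = 2) := by
  classical
  have hne : (S.powerset.filter fun F : Finset (Sym2 V) =>
      ¬ (G.deleteEdges (↑F : Set (Sym2 V))).Connected).Nonempty :=
    ⟨S, by simp [hd]⟩
  obtain ⟨F, hF, hmin⟩ := Finset.exists_min_image _ Finset.card hne
  simp only [Finset.mem_filter, Finset.mem_powerset] at hF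
  have hFE : IsEdgeCut G F := by
    refine ⟨(Finset.coe_subset.2 hF.1).trans hS, hF.2, fun F' hF' => ?_⟩
    by_contra hc
    have h1 := hmin F' (by
      simp only [Finset.mem_filter, Finset.mem_powerset]
      exact ⟨hF'.subset.trans hF.1, hc⟩)
    exact absurd (Finset.card_lt_card hF') (not_lt.2 h1)
  have h1 : F ≠ ∅ := by
    rintro rfl
    exact hF.2 (by simpa using hconn)
  have h2 := Finset.card_le_card hF.1
  have h3 := Finset.card_pos.2 (Finset.nonempty_of_ne_empty h1)
  exact ⟨F, hFE, by omega⟩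

open Classical in
/-- Edges of `T` with one end in `X` and the other in `Y`. -/
noncomputable def btwF (T : Finset (Sym2 V)) (X Y : Set V) : Finset (Sym2 V) :=
  T.filter fun e => ∃ a ∈ X, ∃ b ∈ Y, e = s(a, b)

lemma mem_btwF {T : Finset (Sym2 V)} {X Y : Set V} {e : Sym2 V} :
    e ∈ btwF T X Y ↔ e ∈ T ∧ ∃ a ∈ X, ∃ b ∈ Y, e = s(a, b) := by
  simp [btwF]

lemma btwF_comm (T : Finset (Sym2 V)) (X Y : Set V) : btwF T X Y = btwF T Y X := by
  ext e
  simp only [mem_btwF]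
  constructor <;> rintro ⟨ht, a, ha, b, hb, rfl⟩ <;> exact ⟨ht, b, hb, a, ha, Sym2.eq_swap⟩

lemma btwF_union_right (T : Finset (Sym2 V)) (X Y Z : Set V) :
    btwF T X (Y ∪ Z) = btwF T X Y ∪ btwF T X Z := by
  ext e
  simp only [mem_btwF, Finset.mem_union, Set.mem_union]
  constructor
  · rintro ⟨ht, a, ha, b, (hb | hb), rfl⟩
    · exact Or.inl ⟨ht, a, ha, b, hb, rfl⟩
    · exact Or.inr ⟨ht, a, ha, b, hb, rfl⟩
  · rintro (⟨ht, a, ha, b, hb, rfl⟩ | ⟨ht, a, ha, b, hb, rfl⟩)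
    · exact ⟨ht, a, ha, b, Or.inl hb, rfl⟩
    · exact ⟨ht, a, ha, b, Or.inr hb, rfl⟩

lemma btwF_union_left (T : Finset (Sym2 V)) (X Y Z : Set V) :
    btwF T (X ∪ Y) Z = btwF T X Z ∪ btwF T Y Z := by
  rw [btwF_comm, btwF_union_right, btwF_comm T Z X, btwF_comm T Z Y]

lemma btwF_disjoint {T : Finset (Sym2 V)} {X Y X' Y' : Set V}
    (h1 : Disjoint X X') (h2 : Disjoint X Y') :
    Disjoint (btwF T X Y) (btwF T X' Y') := by
  rw [Finset.disjoint_left]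
  intro e he he'
  obtain ⟨-, a, ha, b, hb, rfl⟩ := mem_btwF.1 he
  obtain ⟨-, a', ha', b', hb', h⟩ := mem_btwF.1 he'
  rcases Sym2.eq_iff.1 h with ⟨rfl, rfl⟩ | ⟨rfl, rfl⟩
  · exact Set.disjoint_left.1 h1 ha ha'
  · exact Set.disjoint_left.1 h2 ha hb'

end SmallCutAux

open SmallCutAux

/-- If a connected graph has two crossing 3-edge cuts (the four pairwise
intersections of their sides are all non-empty), then it has an edge cut of
size 1 or 2. -/
theorem small_cut_of_crossing_three_cuts {V : Type*} (G : SimpleGraph V)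
    (hconn : G.Connected)
    (E1 E2 : Finset (Sym2 V)) (A1 A2 : Set V)
    (hc1 : IsEdgeCut G E1) (hc2 : IsEdgeCut G E2)
    (h3a : E1.card = 3) (h3b : E2.card = 3)
    (hs1 : IsCutSide G E1 A1) (hs2 : IsCutSide G E2 A2)
    (hcross : (A1 ∩ A2).Nonempty ∧ (A1 ∩ A2ᶜ).Nonempty ∧
      (A1ᶜ ∩ A2).Nonempty ∧ (A1ᶜ ∩ A2ᶜ).Nonempty) :
    ∃ F : Finset (Sym2 V), IsEdgeCut G F ∧ (F.card = 1 ∨ F.card = 2) := by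
  classical
  obtain ⟨hPne, hQne, hRne, hSne⟩ := hcross
  set T : Finset (Sym2 V) := E1 ∪ E2 with hT
  set P := A1 ∩ A2 with hPdef
  set Q := A1 ∩ A2ᶜ with hQdef
  set R := A1ᶜ ∩ A2 with hRdef
  set S := A1ᶜ ∩ A2ᶜ with hSdef
  have hTE : (↑T : Set (Sym2 V)) ⊆ G.edgeSet := by
    rw [hT, Finset.coe_union]; exact Set.union_subset hc1.1 hc2.1
  have hE1c : (↑E1 : Set (Sym2 V)) = crossSet G A1 := hs1.2.2
  have hE2c : (↑E2 : Set (Sym2 V)) = crossSet G A2 := hs2.2.2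
  -- pairwise disjointness of the corners
  have dPQ : Disjoint P Q := Set.disjoint_left.2 fun x hx hx' => hx'.2 hx.2
  have dPR : Disjoint P R := Set.disjoint_left.2 fun x hx hx' => hx'.1 hx.1
  have dPS : Disjoint P S := Set.disjoint_left.2 fun x hx hx' => hx'.1 hx.1
  have dQR : Disjoint Q R := Set.disjoint_left.2 fun x hx hx' => hx'.1 hx.1
  have dQS : Disjoint Q S := Set.disjoint_left.2 fun x hx hx' => hx'.1 hx.1
  have dRS : Disjoint R S := Set.disjoint_left.2 fun x hx hx' => hx'.2 hx.2
  -- set identities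
  have hA1P : A1 = P ∪ Q := by
    ext x; simp only [hPdef, hQdef, Set.mem_union, Set.mem_inter_iff, Set.mem_compl_iff]; tauto
  have hA1cP : A1ᶜ = R ∪ S := by
    ext x
    simp only [hRdef, hSdef, Set.mem_union, Set.mem_inter_iff, Set.mem_compl_iff]; tauto
  have hA2P : A2 = P ∪ R := by
    ext x; simp only [hPdef, hRdef, Set.mem_union, Set.mem_inter_iff, Set.mem_compl_iff]; tauto
  have hA2cP : A2ᶜ = Q ∪ S := by
    ext x
    simp only [hQdef, hSdef, Set.mem_union, Set.mem_inter_iff, Set.mem_compl_iff]; tauto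
  have hPc : Pᶜ = Q ∪ (R ∪ S) := by
    ext x
    simp only [hPdef, hQdef, hRdef, hSdef, Set.mem_union, Set.mem_inter_iff,
      Set.mem_compl_iff]
    tauto
  have hQc : Qᶜ = P ∪ (R ∪ S) := by
    ext x
    simp only [hPdef, hQdef, hRdef, hSdef, Set.mem_union, Set.mem_inter_iff,
      Set.mem_compl_iff]
    tauto
  have hRc : Rᶜ = P ∪ (Q ∪ S) := by
    ext x
    simp only [hPdef, hQdef, hRdef, hSdef, Set.mem_union, Set.mem_inter_iff,
      Set.mem_compl_iff]
    tauto
  have hSc : Sᶜ = P ∪ (Q ∪ R) := by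
    ext x
    simp only [hPdef, hQdef, hRdef, hSdef, Set.mem_union, Set.mem_inter_iff,
      Set.mem_compl_iff]
    tauto
  -- the cuts as `btwF`
  have hE1b : E1 = btwF T A1 A1ᶜ := by
    apply Finset.coe_injective
    ext e
    simp only [Finset.mem_coe, mem_btwF]
    constructor
    · intro he
      have h1 : e ∈ crossSet G A1 := by rw [← hE1c]; exact he
      exact ⟨by rw [hT]; exact Finset.mem_union_left _ he, h1.2⟩
    · rintro ⟨ht, hcr⟩
      have h1 : e ∈ crossSet G A1 := ⟨hTE (Finset.mem_coe.2 ht), hcr⟩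
      rw [← Finset.mem_coe, hE1c]; exact h1
  have hE2b : E2 = btwF T A2 A2ᶜ := by
    apply Finset.coe_injective
    ext e
    simp only [Finset.mem_coe, mem_btwF]
    constructor
    · intro he
      have h1 : e ∈ crossSet G A2 := by rw [← hE2c]; exact he
      exact ⟨by rw [hT]; exact Finset.mem_union_right _ he, h1.2⟩
    · rintro ⟨ht, hcr⟩
      have h1 : e ∈ crossSet G A2 := ⟨hTE (Finset.mem_coe.2 ht), hcr⟩
      rw [← Finset.mem_coe, hE2c]; exact h1
  -- decompositions
  have eq1 : E1 = (btwF T P R ∪ btwF T P S) ∪ (btwF T Q R ∪ btwF T Q S) := by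
    rw [hE1b, hA1cP, hA1P, btwF_union_left, btwF_union_right, btwF_union_right]
  have eq2 : E2 = (btwF T P Q ∪ btwF T P S) ∪ (btwF T R Q ∪ btwF T R S) := by
    rw [hE2b, hA2cP, hA2P, btwF_union_left, btwF_union_right, btwF_union_right]
  have eqP : btwF T P Pᶜ = btwF T P Q ∪ (btwF T P R ∪ btwF T P S) := by
    rw [hPc, btwF_union_right, btwF_union_right]
  have eqQ : btwF T Q Qᶜ = btwF T Q P ∪ (btwF T Q R ∪ btwF T Q S) := by
    rw [hQc, btwF_union_right, btwF_union_right]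
  have eqR : btwF T R Rᶜ = btwF T R P ∪ (btwF T R Q ∪ btwF T R S) := by
    rw [hRc, btwF_union_right, btwF_union_right]
  have eqS : btwF T S Sᶜ = btwF T S P ∪ (btwF T S Q ∪ btwF T S R) := by
    rw [hSc, btwF_union_right, btwF_union_right]
  -- disjointness of the `btwF` pieces
  have DPRPS : Disjoint (btwF T P R) (btwF T P S) := by
    rw [btwF_comm T P R]; exact btwF_disjoint dPR.symm dRS
  have DQRQS : Disjoint (btwF T Q R) (btwF T Q S) := by
    rw [btwF_comm T Q R]; exact btwF_disjoint dQR.symm dRS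
  have DPQPS : Disjoint (btwF T P Q) (btwF T P S) := by
    rw [btwF_comm T P Q]; exact btwF_disjoint dPQ.symm dQS
  have DPQPR : Disjoint (btwF T P Q) (btwF T P R) := by
    rw [btwF_comm T P Q]; exact btwF_disjoint dPQ.symm dQR
  have DRQRS : Disjoint (btwF T R Q) (btwF T R S) := by
    rw [btwF_comm T R Q]; exact btwF_disjoint dQR dQS
  -- card equations
  have card1 : E1.card =
      (btwF T P R).card + (btwF T P S).card + ((btwF T Q R).card + (btwF T Q S).card) := by
    rw [eq1, Finset.card_union_of_disjoint, Finset.card_union_of_disjoint DPRPS,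
      Finset.card_union_of_disjoint DQRQS]
    refine Finset.disjoint_union_left.2 ⟨?_, ?_⟩ <;> refine Finset.disjoint_union_right.2 ⟨?_, ?_⟩
    · exact btwF_disjoint dPQ dPR
    · exact btwF_disjoint dPQ dPS
    · exact btwF_disjoint dPQ dPR
    · exact btwF_disjoint dPQ dPS
  have card2 : E2.card =
      (btwF T P Q).card + (btwF T P S).card + ((btwF T Q R).card + (btwF T R S).card) := by
    rw [eq2, Finset.card_union_of_disjoint, Finset.card_union_of_disjoint DPQPS,
      Finset.card_union_of_disjoint DRQRS, btwF_comm T R Q]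
    refine Finset.disjoint_union_left.2 ⟨?_, ?_⟩ <;> refine Finset.disjoint_union_right.2 ⟨?_, ?_⟩
    · exact btwF_disjoint dPR dPQ
    · exact btwF_disjoint dPR dPS
    · exact btwF_disjoint dPR dPQ
    · exact btwF_disjoint dPR dPS
  have cardP : (btwF T P Pᶜ).card =
      (btwF T P Q).card + ((btwF T P R).card + (btwF T P S).card) := by
    rw [eqP, Finset.card_union_of_disjoint, Finset.card_union_of_disjoint DPRPS]
    exact Finset.disjoint_union_right.2 ⟨DPQPR, DPQPS⟩
  have cardQ : (btwF T Q Qᶜ).card =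
      (btwF T P Q).card + ((btwF T Q R).card + (btwF T Q S).card) := by
    rw [eqQ, Finset.card_union_of_disjoint, Finset.card_union_of_disjoint DQRQS,
      btwF_comm T Q P]
    refine Finset.disjoint_union_right.2 ⟨?_, ?_⟩
    · rw [btwF_comm T Q P]; exact btwF_disjoint dPQ dPR
    · rw [btwF_comm T Q P]; exact btwF_disjoint dPQ dPS
  have cardR : (btwF T R Rᶜ).card =
      (btwF T P R).card + ((btwF T Q R).card + (btwF T R S).card) := by
    rw [eqR, Finset.card_union_of_disjoint, Finset.card_union_of_disjoint DRQRS,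
      btwF_comm T R P, btwF_comm T R Q]
    refine Finset.disjoint_union_right.2 ⟨?_, ?_⟩
    · rw [btwF_comm T R P]; exact btwF_disjoint dPR dPQ
    · rw [btwF_comm T R P]; exact btwF_disjoint dPR dPS
  have cardS : (btwF T S Sᶜ).card =
      (btwF T P S).card + ((btwF T Q S).card + (btwF T R S).card) := by
    have DSQSR : Disjoint (btwF T S Q) (btwF T S R) := by
      rw [btwF_comm T S Q]; exact btwF_disjoint dQS dQR
    rw [eqS, Finset.card_union_of_disjoint, Finset.card_union_of_disjoint DSQSR,
      btwF_comm T S P, btwF_comm T S Q, btwF_comm T S R]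
    refine Finset.disjoint_union_right.2 ⟨?_, ?_⟩
    · rw [btwF_comm T S P]; exact btwF_disjoint dPS dPQ
    · rw [btwF_comm T S P]; exact btwF_disjoint dPS dPR
  -- some corner has a boundary of size ≤ 2
  have hsmall : (btwF T P Pᶜ).card ≤ 2 ∨ (btwF T Q Qᶜ).card ≤ 2 ∨
      (btwF T R Rᶜ).card ≤ 2 ∨ (btwF T S Sᶜ).card ≤ 2 := by
    rw [h3a] at card1; rw [h3b] at card2
    omega
  -- the finishing move
  have hfin : ∀ X : Set V, X.Nonempty → Xᶜ.Nonempty → crossSet G X ⊆ ↑T →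
      (btwF T X Xᶜ).card ≤ 2 →
      ∃ F : Finset (Sym2 V), IsEdgeCut G F ∧ (F.card = 1 ∨ F.card = 2) := by
    intro X hX hXc hsub hle
    have hcoe : (↑(btwF T X Xᶜ) : Set (Sym2 V)) = crossSet G X := by
      ext e
      simp only [Finset.mem_coe, mem_btwF]
      constructor
      · rintro ⟨ht, hcr⟩; exact ⟨hTE (Finset.mem_coe.2 ht), hcr⟩
      · intro he; exact ⟨Finset.mem_coe.1 (hsub he), he.2⟩
    refine exists_small_edge_cut G hconn _ ?_ ?_ hle
    · rw [hcoe]; exact crossSet_subset_edgeSet G X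
    · rw [hcoe]; exact crossSet_disconnect G hX hXc
  -- boundaries of corners are inside T
  have hTset : (↑T : Set (Sym2 V)) = crossSet G A1 ∪ crossSet G A2 := by
    rw [hT, Finset.coe_union, hE1c, hE2c]
  have hsubP : crossSet G P ⊆ ↑T := by
    rw [hTset, hPdef]; exact crossSet_inter_subset G A1 A2
  have hsubQ : crossSet G Q ⊆ ↑T := by
    rw [hTset, hQdef, ← crossSet_compl G A2]; exact crossSet_inter_subset G A1 A2ᶜ
  have hsubR : crossSet G R ⊆ ↑T := by
    rw [hTset, hRdef, ← crossSet_compl G A1]; exact crossSet_inter_subset G A1ᶜ A2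
  have hsubS : crossSet G S ⊆ ↑T := by
    rw [hTset, hSdef, ← crossSet_compl G A1, ← crossSet_compl G A2]
    exact crossSet_inter_subset G A1ᶜ A2ᶜ
  rcases hsmall with h | h | h | h
  · exact hfin P hPne (hSne.mono fun x hx hx' => hx.1 hx'.1) hsubP h
  · exact hfin Q hQne (hRne.mono fun x hx hx' => hx.1 hx'.1) hsubQ h
  · exact hfin R hRne (hQne.mono fun x hx hx' => hx'.1 hx.1) hsubR h
  · exact hfin S hSne (hPne.mono fun x hx hx' => hx'.1 hx.1) hsubS h
end

section
/- Let G be a 3-connected graph with edge (s,t), and let E1, ..., Eq be all its 3-edge s,t-cuts, ordered so that V^s(E_1) ⊂ V^s(E_2) ⊂ ... ⊂ V^s(E_q). Each E_i contains the edge (s,t). Setting V_0 = V^s(E_1), V_q = V^t(E_q), and V_i = V^s(E_{i+1}) \ V^s(E_i) for 1 ≤ i ≤ q−1, each V_i is non-empty, and in G minus the edge (s,t), the two edges of E_i \ {(s,t)} both join V_{i−1} to V_i; no edge of G minus (s,t) joins V_j to V_k for |j − k| ≥ 2. -/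
/-- `F` is a minimal `s,t`-edge-cut of `G`. -/
def IsMinimalSTCut {V : Type*} (G : SimpleGraph V) (s t : V)
    (F : Finset (Sym2 V)) : Prop :=
  ↑F ⊆ G.edgeSet ∧ ¬ (G.deleteEdges ↑F).Reachable s t ∧
    ∀ F' : Finset (Sym2 V), F' ⊂ F → (G.deleteEdges ↑F').Reachable s t

/-- The side of the cut `F` containing `s`. -/
def cutSideS {V : Type*} (G : SimpleGraph V) (F : Finset (Sym2 V)) (s : V) : Set V :=
  {v | (G.deleteEdges ↑F).Reachable s v}

/-- The pieces `V_0, …, V_q` of `V` determined by the nested 3-edge `s,t`-cuts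
`E 1, …, E q`:  `V_0 = V^s(E_1)`, `V_i = V^s(E_{i+1}) \ V^s(E_i)` for
`1 ≤ i ≤ q-1`, and `V_q = V^t(E_q) = (V^s(E_q))ᶜ`. -/
def piece {V : Type*} (G : SimpleGraph V) (s : V) (E : ℕ → Finset (Sym2 V))
    (q : ℕ) : ℕ → Set V := fun i =>
  if i = 0 then cutSideS G (E 1) s
  else if i < q then cutSideS G (E (i + 1)) s \ cutSideS G (E i) s
  else (cutSideS G (E q) s)ᶜ

/-!
Everything reduces to one fact about two minimum `s,t`-cuts `F₁, F₂` with
`V^s(F₁) ⊊ V^s(F₂)`: no edge `ab ≠ st` runs from `V^s(F₁)` to `V^t(F₂)`. Otherwise `ab` and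
`st` lie in both cuts, so the nonempty middle region `D = V^s(F₂) \ V^s(F₁)` is left only by
the third edge of `F₁` and the third edge of `F₂`. Their endpoints `p, r'` outside `D` then
separate `D` from the rest of the graph, so by 3-connectivity every vertex outside `D` is `p`
or `r'`; but `s, t, a, b` lie outside `D`, forcing `ab = st`. The remaining claims follow from
the nesting of the cuts and from the fact that every edge of a minimal cut crosses it.
-/

open SimpleGraph

section

variable {V : Type*}

lemma Finset.exists_eq_insert_insert_singleton_of_card_eq_three [DecidableEq V]
    {F : Finset V} (hF : F.card = 3) {u v : V} (hu : u ∈ F) (hv : v ∈ F) (huv : u ≠ v) :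
    ∃ w, F = {u, v, w} := by
  have hv' : v ∈ F.erase u := Finset.mem_erase.mpr ⟨huv.symm, hv⟩
  obtain ⟨w, hw⟩ : ∃ w, (F.erase u).erase v = {w} := Finset.card_eq_one.mp (by
    rw [Finset.card_erase_of_mem hv', Finset.card_erase_of_mem hu, hF])
  exact ⟨w, by rw [← hw, Finset.insert_erase hv', Finset.insert_erase hu]⟩

lemma IsKConnected.compl_subset_of_forall_adj [Fintype V] {G : SimpleGraph V} {k : ℕ}
    (hG : IsKConnected G k) {S : Finset V} (hS : S.card < k) {D : Set V}
    (hD : ∀ x y, x ∈ D → y ∉ D → G.Adj x y → y ∈ S) {x : V} (hx : x ∈ D) (hxS : x ∉ S) :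
    Dᶜ ⊆ S := by
  intro y hy
  by_contra hyS
  obtain ⟨w⟩ := (hG.2 S hS).preconnected ⟨x, hxS⟩ ⟨y, hyS⟩
  obtain ⟨d, -, hd₁, hd₂⟩ := w.exists_boundary_dart {z | z.1 ∈ D} hx hy
  exact d.snd.2 (hD _ _ hd₁ hd₂ d.adj)

section Cuts

variable {G : SimpleGraph V} {s t : V} {F : Finset (Sym2 V)}

lemma mem_cutSideS_self (G : SimpleGraph V) (F : Finset (Sym2 V)) (s : V) :
    s ∈ cutSideS G F s :=
  Reachable.refl s

lemma IsMinimalSTCut.notMem_cutSideS (hF : IsMinimalSTCut G s t F) :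
    t ∉ cutSideS G F s :=
  hF.2.1

lemma mk_mem_of_adj_of_mem_cutSideS {x y : V} (hx : x ∈ cutSideS G F s)
    (hy : y ∉ cutSideS G F s) (hxy : G.Adj x y) : s(x, y) ∈ F := by
  by_contra h
  exact hy (hx.trans (deleteEdges_adj.mpr ⟨hxy, h⟩).reachable)

lemma IsMinimalSTCut.mk_mem (hF : IsMinimalSTCut G s t F) (hst : G.Adj s t) :
    s(s, t) ∈ F :=
  mk_mem_of_adj_of_mem_cutSideS (mem_cutSideS_self G F s) hF.notMem_cutSideS hst

lemma IsMinimalSTCut.exists_eq_mk_of_mem (hF : IsMinimalSTCut G s t F) {e : Sym2 V}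
    (he : e ∈ F) : ∃ a b, e = s(a, b) ∧ a ∈ cutSideS G F s ∧ b ∉ cutSideS G F s := by
  classical
  obtain ⟨w⟩ := hF.2.2 (F.erase e) (Finset.erase_ssubset he)
  obtain ⟨d, -, hd₁, hd₂⟩ :=
    w.exists_boundary_dart _ (mem_cutSideS_self G F s) hF.notMem_cutSideS
  obtain ⟨hadj, hd⟩ := deleteEdges_adj.mp d.adj
  have hdF := mk_mem_of_adj_of_mem_cutSideS hd₁ hd₂ hadj
  refine ⟨d.fst, d.snd, ?_, hd₁, hd₂⟩
  by_contra hne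
  exact hd (Finset.mem_erase.mpr ⟨Ne.symm hne, hdF⟩)

end Cuts

lemma Sym2.mk_ne_mk_of_mem_of_notMem {D : Set V} {x y u v : V} (hx : x ∈ D) (hu : u ∉ D)
    (hv : v ∉ D) : s(x, y) ≠ s(u, v) := by
  intro h
  rcases Sym2.mem_iff.mp (h ▸ Sym2.mem_mk_left x y) with rfl | rfl
  · exact hu hx
  · exact hv hx

lemma Sym2.eq_of_mk_eq_of_notMem {A : Set V} {x y p p' : V} (h : s(x, y) = s(p, p'))
    (hx : x ∉ A) (hp : p ∈ A) : y = p := by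
  rcases Sym2.eq_iff.mp h with ⟨rfl, -⟩ | ⟨-, rfl⟩
  · exact absurd hp hx
  · rfl

theorem IsMinimalSTCut.mk_eq_of_adj_of_cutSideS_ssubset [Fintype V] {G : SimpleGraph V}
    (h3 : IsKConnected G 3) {s t : V} (hst : G.Adj s t) {F₁ F₂ : Finset (Sym2 V)}
    (hF₁ : IsMinimalSTCut G s t F₁) (hc₁ : F₁.card = 3)
    (hF₂ : IsMinimalSTCut G s t F₂) (hc₂ : F₂.card = 3)
    (hlt : cutSideS G F₁ s ⊂ cutSideS G F₂ s) {a b : V} (ha : a ∈ cutSideS G F₁ s)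
    (hb : b ∉ cutSideS G F₂ s) (hab : G.Adj a b) : s(a, b) = s(s, t) := by
  classical
  by_contra hne
  set S₁ := cutSideS G F₁ s
  set S₂ := cutSideS G F₂ s
  obtain ⟨f, hf⟩ := Finset.exists_eq_insert_insert_singleton_of_card_eq_three hc₁
    (hF₁.mk_mem hst) (mk_mem_of_adj_of_mem_cutSideS ha (fun h => hb (hlt.subset h)) hab)
    (Ne.symm hne)
  obtain ⟨g, hg⟩ := Finset.exists_eq_insert_insert_singleton_of_card_eq_three hc₂
    (hF₂.mk_mem hst) (mk_mem_of_adj_of_mem_cutSideS (hlt.subset ha) hb hab) (Ne.symm hne)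
  obtain ⟨p, p', rfl, hp, -⟩ := hF₁.exists_eq_mk_of_mem (e := f) (by simp [hf])
  obtain ⟨r, r', rfl, -, hr'⟩ := hF₂.exists_eq_mk_of_mem (e := g) (by simp [hg])
  set D := S₂ \ S₁
  have hs : s ∉ D := fun h => h.2 (mem_cutSideS_self G F₁ s)
  have ht : t ∉ D := fun h => hF₂.notMem_cutSideS h.1
  have haD : a ∉ D := fun h => h.2 ha
  have hbD : b ∉ D := fun h => hb h.1
  have hboundary : ∀ x y, x ∈ D → y ∉ D → G.Adj x y → y ∈ ({p, r'} : Finset V) := by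
    intro x y hx hy hxy
    have hst' := Sym2.mk_ne_mk_of_mem_of_notMem (y := y) hx hs ht
    have hab' := Sym2.mk_ne_mk_of_mem_of_notMem (y := y) hx haD hbD
    by_cases hy₁ : y ∈ S₁
    · have hxy₁ : s(x, y) ∈ F₁ := by
        rw [Sym2.eq_swap]; exact mk_mem_of_adj_of_mem_cutSideS hy₁ hx.2 hxy.symm
      simp only [hf, Finset.mem_insert, Finset.mem_singleton, hst', hab', false_or] at hxy₁
      simp [Sym2.eq_of_mk_eq_of_notMem hxy₁ hx.2 hp]
    · have hxy₂ : s(x, y) ∈ F₂ :=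
        mk_mem_of_adj_of_mem_cutSideS hx.1 (fun h => hy ⟨h, hy₁⟩) hxy
      simp only [hg, Finset.mem_insert, Finset.mem_singleton, hst', hab', false_or] at hxy₂
      rw [Sym2.eq_swap (a := r)] at hxy₂
      simp [Sym2.eq_of_mk_eq_of_notMem (A := S₂ᶜ) hxy₂ (not_not.mpr hx.1) hr']
  obtain ⟨x, hx₂, hx₁⟩ := Set.exists_of_ssubset hlt
  have hx : x ∉ ({p, r'} : Finset V) := by
    simp only [Finset.mem_insert, Finset.mem_singleton, not_or]
    exact ⟨fun h => hx₁ (h ▸ hp), fun h => hr' (h ▸ hx₂)⟩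
  have hsep : ∀ z ∉ D, z = p ∨ z = r' := fun z hz => by
    simpa using h3.compl_subset_of_forall_adj (Finset.card_le_two.trans_lt (by norm_num))
      hboundary ⟨hx₂, hx₁⟩ hx hz
  have hat : a ≠ t := fun h => hF₁.notMem_cutSideS (h ▸ ha)
  have hbs : b ≠ s := fun h => hb (h ▸ mem_cutSideS_self G F₂ s)
  -- `s ≠ t` are `p` and `r'` in some order, so `a ≠ t` is `s` and `b ≠ s` is `t`.
  grind [hsep s hs, hsep t ht, hsep a haD, hsep b hbD, hst.ne]

section Pieces

variable {G : SimpleGraph V} {s : V} {E : ℕ → Finset (Sym2 V)} {q : ℕ}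

lemma cutSideS_mono
    (hnested : ∀ i, 1 ≤ i → i < q → cutSideS G (E i) s ⊂ cutSideS G (E (i + 1)) s)
    {i m : ℕ} (hi : 1 ≤ i) (him : i ≤ m) (hm : m ≤ q) :
    cutSideS G (E i) s ⊆ cutSideS G (E m) s := by
  induction m, him using Nat.le_induction with
  | base => exact subset_rfl
  | succ m hm' ih => exact (ih (by omega)).trans (hnested m (by omega) (by omega)).subset

lemma mem_cutSideS_of_mem_piece
    (hnested : ∀ i, 1 ≤ i → i < q → cutSideS G (E i) s ⊂ cutSideS G (E (i + 1)) s)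
    {i j : ℕ} {v : V} (hv : v ∈ piece G s E q j) (hji : j < i) (hi : i ≤ q) :
    v ∈ cutSideS G (E i) s := by
  refine cutSideS_mono hnested (by omega) hji hi ?_
  unfold piece at hv
  split_ifs at hv with h₀ h₁
  · exact h₀ ▸ hv
  · exact hv.1
  · omega

lemma notMem_cutSideS_of_mem_piece
    (hnested : ∀ i, 1 ≤ i → i < q → cutSideS G (E i) s ⊂ cutSideS G (E (i + 1)) s)
    {i j : ℕ} {v : V} (hv : v ∈ piece G s E q j) (hi : 1 ≤ i) (hij : i ≤ j) (hj : j ≤ q) :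
    v ∉ cutSideS G (E i) s := by
  refine fun h => ?_
  have := cutSideS_mono hnested hi hij hj h
  unfold piece at hv
  split_ifs at hv with h₀ h₁
  · omega
  · exact hv.2 this
  · exact hv (by rwa [show j = q by omega] at this)

lemma exists_mem_piece (G : SimpleGraph V) (s : V) (E : ℕ → Finset (Sym2 V)) (hq : 1 ≤ q)
    (v : V) : ∃ j ≤ q, v ∈ piece G s E q j := by
  by_cases hvq : v ∈ cutSideS G (E q) s
  · suffices ∀ m, 1 ≤ m → m ≤ q → v ∈ cutSideS G (E m) s → ∃ j < m, v ∈ piece G s E q j by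
      obtain ⟨j, hj, hv⟩ := this q hq le_rfl hvq
      exact ⟨j, hj.le, hv⟩
    intro m hm
    induction m, hm using Nat.le_induction with
    | base => exact fun _ hv => ⟨0, one_pos, by simpa [piece] using hv⟩
    | succ m hm ih =>
      intro hmq hv
      by_cases hvm : v ∈ cutSideS G (E m) s
      · obtain ⟨j, hj, hvj⟩ := ih (by omega) hvm
        exact ⟨j, by omega, hvj⟩
      · refine ⟨m, by omega, ?_⟩
        simp only [piece, if_neg (show m ≠ 0 by omega), if_pos (show m < q by omega)]
        exact ⟨hv, hvm⟩
  · exact ⟨q, le_rfl, by simpa [piece, show q ≠ 0 by omega] using hvq⟩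

lemma piece_nonempty
    (hnested : ∀ i, 1 ≤ i → i < q → cutSideS G (E i) s ⊂ cutSideS G (E (i + 1)) s)
    {t : V} (hq : IsMinimalSTCut G s t (E q)) (i : ℕ) :
    (piece G s E q i).Nonempty := by
  unfold piece
  split_ifs with h₀ h₁
  · exact ⟨s, mem_cutSideS_self G _ s⟩
  · obtain ⟨v, hv⟩ := Set.exists_of_ssubset (hnested i (by omega) h₁)
    exact ⟨v, hv⟩
  · exact ⟨t, hq.notMem_cutSideS⟩

theorem mk_eq_of_mem_piece_of_add_two_le [Fintype V] (h3 : IsKConnected G 3) {t : V}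
    (hst : G.Adj s t)
    (hcut : ∀ i, 1 ≤ i → i ≤ q → IsMinimalSTCut G s t (E i) ∧ (E i).card = 3)
    (hnested : ∀ i, 1 ≤ i → i < q → cutSideS G (E i) s ⊂ cutSideS G (E (i + 1)) s)
    {j k : ℕ} (hjk : j + 2 ≤ k) (hk : k ≤ q) {a b : V} (ha : a ∈ piece G s E q j)
    (hb : b ∈ piece G s E q k) (hab : G.Adj a b) : s(a, b) = s(s, t) := by
  obtain ⟨hF₁, hc₁⟩ := hcut (j + 1) (by omega) (by omega)
  obtain ⟨hF₂, hc₂⟩ := hcut (j + 2) (by omega) (by omega)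
  exact hF₁.mk_eq_of_adj_of_cutSideS_ssubset h3 hst hc₁ hF₂ hc₂
    (hnested (j + 1) (by omega) (by omega))
    (mem_cutSideS_of_mem_piece hnested ha (by omega) (by omega))
    (notMem_cutSideS_of_mem_piece hnested hb (by omega) hjk hk) hab

end Pieces

end

theorem nested_cut_structure_general {V : Type*} [Fintype V]
    (G : SimpleGraph V) (h3 : IsKConnected G 3)
    (s t : V) (hst : s(s, t) ∈ G.edgeSet)
    (q : ℕ) (hq : 1 ≤ q) (E : ℕ → Finset (Sym2 V))
    (hall : ∀ F : Finset (Sym2 V),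
      (IsMinimalSTCut G s t F ∧ F.card = 3) ↔ ∃ i, 1 ≤ i ∧ i ≤ q ∧ F = E i)
    (hnested : ∀ i, 1 ≤ i → i < q →
      cutSideS G (E i) s ⊂ cutSideS G (E (i + 1)) s) :
    (∀ i, 1 ≤ i → i ≤ q → s(s, t) ∈ E i) ∧
    (∀ i, i ≤ q → (piece G s E q i).Nonempty) ∧
    (∀ i, 1 ≤ i → i ≤ q → ∀ e ∈ E i, e ≠ s(s, t) →
      ∃ a ∈ piece G s E q (i - 1), ∃ b ∈ piece G s E q i, e = s(a, b)) ∧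
    (∀ j k, j ≤ q → k ≤ q → j + 2 ≤ k →
      ∀ a ∈ piece G s E q j, ∀ b ∈ piece G s E q k,
        ¬ (G.deleteEdges {s(s, t)}).Adj a b) := by
  have hcut i (h₁ : 1 ≤ i) (h₂ : i ≤ q) : IsMinimalSTCut G s t (E i) ∧ (E i).card = 3 :=
    (hall (E i)).mpr ⟨i, h₁, h₂, rfl⟩
  refine ⟨fun i h₁ h₂ => (hcut i h₁ h₂).1.mk_mem hst,
    fun i _ => piece_nonempty hnested (hcut q hq le_rfl).1 i, ?_, ?_⟩
  · intro i h₁ h₂ e he hne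
    obtain ⟨a, b, rfl, ha, hb⟩ := (hcut i h₁ h₂).1.exists_eq_mk_of_mem he
    obtain ⟨j, hj, haj⟩ := exists_mem_piece G s E hq a
    obtain ⟨k, hk, hbk⟩ := exists_mem_piece G s E hq b
    have hji : j < i := by
      by_contra! h
      exact notMem_cutSideS_of_mem_piece hnested haj h₁ h hj ha
    have hik : i ≤ k := by
      by_contra! h
      exact hb (mem_cutSideS_of_mem_piece hnested hbk h h₂)
    have hkj : k < j + 2 := by
      by_contra! h
      exact hne <| mk_eq_of_mem_piece_of_add_two_le h3 hst hcut hnested h hk haj hbk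
        ((hcut i h₁ h₂).1.1 he)
    obtain rfl : j = i - 1 := by omega
    obtain rfl : k = i := by omega
    exact ⟨a, haj, b, hbk, rfl⟩
  · intro j k _ hk hjk a ha b hb hab
    obtain ⟨hab, hne⟩ := deleteEdges_adj.mp hab
    exact hne (mk_eq_of_mem_piece_of_add_two_le h3 hst hcut hnested hjk hk ha hb hab)

/-- Structure of the nested sequence of all 3-edge `s,t`-cuts `E 1 ⊂ … ⊂ E q` of a
3-connected graph `G` with `(s,t) ∈ E`: each cut contains the edge `(s,t)`, all
pieces are non-empty, the two remaining edges of `E i` join `V_{i-1}` to `V_i` in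
`G` minus `(s,t)`, and no edge of `G` minus `(s,t)` joins pieces at distance ≥ 2. -/
theorem nested_cut_structure {V : Type*} [Fintype V]
    (G : SimpleGraph V) (h3 : IsKConnected G 3)
    (s t : V) (hst : s(s, t) ∈ G.edgeSet)
    (q : ℕ) (hq : 1 ≤ q) (E : ℕ → Finset (Sym2 V))
    (hall : ∀ F : Finset (Sym2 V),
      (IsMinimalSTCut G s t F ∧ F.card = 3) ↔ ∃ i, 1 ≤ i ∧ i ≤ q ∧ F = E i)
    (hinj : ∀ i j, 1 ≤ i → i ≤ q → 1 ≤ j → j ≤ q → E i = E j → i = j)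
    (hnested : ∀ i, 1 ≤ i → i < q →
      cutSideS G (E i) s ⊂ cutSideS G (E (i + 1)) s) :
    (∀ i, 1 ≤ i → i ≤ q → s(s, t) ∈ E i) ∧
    (∀ i, i ≤ q → (piece G s E q i).Nonempty) ∧
    (∀ i, 1 ≤ i → i ≤ q → ∀ e ∈ E i, e ≠ s(s, t) →
      ∃ a ∈ piece G s E q (i - 1), ∃ b ∈ piece G s E q i, e = s(a, b)) ∧
    (∀ j k, j ≤ q → k ≤ q → j + 2 ≤ k →
      ∀ a ∈ piece G s E q j, ∀ b ∈ piece G s E q k,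
        ¬ (G.deleteEdges {s(s, t)}).Adj a b) :=
  nested_cut_structure_general G h3 s t hst q hq E hall hnested
end
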